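/- The timed language L' over alphabet {a}, consisting of timed words containing two events at timestamps exactly one time unit apart, is recognized by a nondeterministic one-clock timed automaton with reachability acceptance, but is not recognized by any history-deterministic timed automaton with parity acceptance (with any number of clocks). -/

import Mathlib

open scoped NNReal

/-- Clock constraints (guards): Boolean combinations of `x ≤ n`, `x < n`,
`x − y ≤ n`, `x − y < n`. -/
inductive Guard (C : Type) where
  | tt : Guard C
  | le (x : C) (n : ℕ) : Guard C
  | lt (x : C) (n : ℕ) : Guard C
  | dle (x y : C) (n : ℕ) : Guard C
  | dlt (x y : C) (n : ℕ) : Guard C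
  | band (g₁ g₂ : Guard C) : Guard C
  | bnot (g : Guard C) : Guard C

/-- Satisfaction of a guard by a clock valuation. -/
def Guard.sat {C : Type} : Guard C → (C → ℝ≥0) → Prop
  | .tt, _ => True
  | .le x n, ν => (ν x : ℝ) ≤ n
  | .lt x n, ν => (ν x : ℝ) < n
  | .dle x y n, ν => (ν x : ℝ) - (ν y : ℝ) ≤ n
  | .dlt x y n, ν => (ν x : ℝ) - (ν y : ℝ) < n
  | .band g₁ g₂, ν => g₁.sat ν ∧ g₂.sat ν
  | .bnot g, ν => ¬ g.sat ν

/-- The largest constant appearing in a guard in a constraint involving clock `z`. -/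
def Guard.maxConst {C : Type} [DecidableEq C] : Guard C → C → ℕ
  | .tt, _ => 0
  | .le x n, z => if z = x then n else 0
  | .lt x n, z => if z = x then n else 0
  | .dle x y n, z => if z = x ∨ z = y then n else 0
  | .dlt x y n, z => if z = x ∨ z = y then n else 0
  | .band g₁ g₂, z => max (g₁.maxConst z) (g₂.maxConst z)
  | .bnot g, z => g.maxConst z

/-- A transition of a timed automaton: source, guard, letter, reset set, destination. -/
structure Tr (Q C A : Type) where
  src : Q
  guard : Guard C
  letter : A
  reset : Set C
  dst : Q

/-- A timed automaton (the acceptance condition is kept as a separate parameter). -/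
structure TA (Q C A : Type) where
  init : Q
  trans : Set (Tr Q C A)

namespace TA

variable {Q C A : Type}

/-- The valuation obtained from `ν` by resetting the clocks of transition `τ`. -/
noncomputable def resetVal (τ : Tr Q C A) (ν : C → ℝ≥0) : C → ℝ≥0 :=
  fun x => open Classical in if x ∈ τ.reset then 0 else ν x

/-- Timed words: infinite sequences of letters with strictly increasing timestamps. -/
def IsTimedWord (w : ℕ → A × ℝ≥0) : Prop :=
  StrictMono fun n => (w n).2

/-- The delay elapsing before the `n`-th event of the timed word `w`. -/
noncomputable def delayAt (w : ℕ → A × ℝ≥0) (n : ℕ) : ℝ≥0 :=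
  (w n).2 - (if n = 0 then 0 else (w (n - 1)).2)

/-- The configurations visited along the transition sequence `ρ` on the timed word `w`:
before each discrete step, time elapses up to the next timestamp. -/
noncomputable def configs (T : TA Q C A) (w : ℕ → A × ℝ≥0) (ρ : ℕ → Tr Q C A) :
    ℕ → Q × (C → ℝ≥0)
  | 0 => (T.init, fun _ => 0)
  | n + 1 => ((ρ n).dst, resetVal (ρ n) (fun x => (configs T w ρ n).2 x + delayAt w n))

/-- `ρ` is a run of `T` on the timed word `w` from the initial configuration. -/
def IsRunOn (T : TA Q C A) (w : ℕ → A × ℝ≥0) (ρ : ℕ → Tr Q C A) : Prop :=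
  ∀ n, ρ n ∈ T.trans ∧ (ρ n).letter = (w n).1 ∧ (ρ n).src = (T.configs w ρ n).1 ∧
    (ρ n).guard.sat (fun x => (T.configs w ρ n).2 x + delayAt w n)

/-- The timed language of `T` for the acceptance condition `Acc` on runs. -/
def Lang (T : TA Q C A) (Acc : (ℕ → Tr Q C A) → Prop) : Set (ℕ → A × ℝ≥0) :=
  {w | IsTimedWord w ∧ ∃ ρ, T.IsRunOn w ρ ∧ Acc ρ}

/-- Safety acceptance: all states along the run stay in the safe set. -/
def safetyAcc (safe : Set Q) (ρ : ℕ → Tr Q C A) : Prop :=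
  ∀ n, (ρ n).src ∈ safe ∧ (ρ n).dst ∈ safe

/-- Reachability acceptance: the run visits a state of the target set. -/
def reachAcc (F : Set Q) (ρ : ℕ → Tr Q C A) : Prop :=
  ∃ n, (ρ n).src ∈ F ∨ (ρ n).dst ∈ F

/-- The finite history (timed letters paired with chosen transitions) built by iterating
a candidate resolver `r` on the timed word `w`. -/
def histOf (r : List ((A × ℝ≥0) × Tr Q C A) → (A × ℝ≥0) → Tr Q C A)
    (w : ℕ → A × ℝ≥0) : ℕ → List ((A × ℝ≥0) × Tr Q C A)
  | 0 => []
  | n + 1 => histOf r w n ++ [(w n, r (histOf r w n) (w n))]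

/-- The run built by iterating the resolver `r` on the timed word `w`. -/
def runOf (r : List ((A × ℝ≥0) × Tr Q C A) → (A × ℝ≥0) → Tr Q C A)
    (w : ℕ → A × ℝ≥0) (n : ℕ) : Tr Q C A :=
  r (histOf r w n) (w n)

/-- `r` is a resolver for `T` with acceptance `Acc`. -/
def IsResolver (T : TA Q C A) (Acc : (ℕ → Tr Q C A) → Prop)
    (r : List ((A × ℝ≥0) × Tr Q C A) → (A × ℝ≥0) → Tr Q C A) : Prop :=
  ∀ w ∈ T.Lang Acc, T.IsRunOn w (runOf r w) ∧ Acc (runOf r w)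

/-- History-determinism: existence of a resolver. -/
def HD (T : TA Q C A) (Acc : (ℕ → Tr Q C A) → Prop) : Prop :=
  ∃ r, T.IsResolver Acc r

/-- Determinism: transitions from the same state over the same letter have mutually
exclusive guards. -/
def Deterministic (T : TA Q C A) : Prop :=
  ∀ τ₁ ∈ T.trans, ∀ τ₂ ∈ T.trans, τ₁.src = τ₂.src → τ₁.letter = τ₂.letter →
    τ₁ ≠ τ₂ → ∀ ν : C → ℝ≥0, ¬(τ₁.guard.sat ν ∧ τ₂.guard.sat ν)

end TA

open scoped NNReal

/-- Parity acceptance: the highest priority occurring infinitely often is even. -/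
def parityAcc {Q C A : Type} (pri : Q → ℕ) (ρ : ℕ → Tr Q C A) : Prop :=
  ∃ k, Even k ∧ (∀ N, ∃ n ≥ N, pri (ρ n).dst = k) ∧
    ∀ k', (∀ N, ∃ n ≥ N, pri (ρ n).dst = k') → k' ≤ k

/-- The language `L'` of timed words over a one-letter alphabet containing two events
exactly one time unit apart. -/
def LPrime : Set (ℕ → Unit × ℝ≥0) :=
  {w | TA.IsTimedWord w ∧ ∃ i j : ℕ, ((w j).2 : ℝ) - ((w i).2 : ℝ) = 1}

/-!
A single clock recognizes `L'`: guess the earlier event of the pair, reset the clock there and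
wait for it to read exactly `1`.

Against a resolver for an automaton with `K` clocks, feed `K + 1` events inside `(0, 1)`. The
resolver's choices on them do not depend on what follows, so by pigeonhole some event `j` among
them is the last reset of no clock afterwards. Continue with an event exactly one time unit after
`j`: the word is in `L'`, so the resolver's run accepts it. Delay that event slightly. Since no
clock measures the time elapsed since `j`, every clock value and every difference of clocks stays
in its region, so the same transition sequence is still an accepting run, yet the delayed word
has no two events one time unit apart.
-/

namespace TA

variable {Q C A : Type}

noncomputable def lastReset (ρ : ℕ → Tr Q C A) (x : C) : ℕ → Option ℕ
  | 0 => none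
  | n + 1 => open Classical in if x ∈ (ρ n).reset then some n else lastReset ρ x n

/-- `none` stands for the start of the run, at time `0`. -/
noncomputable def stamp (w : ℕ → A × ℝ≥0) : Option ℕ → ℝ
  | none => 0
  | some m => (w m).2

section lastReset

variable {ρ : ℕ → Tr Q C A} {x : C} {n m : ℕ}

theorem lastReset_succ_of_mem (h : x ∈ (ρ n).reset) : lastReset ρ x (n + 1) = some n := by
  simp [lastReset, h]

theorem lastReset_succ_of_notMem (h : x ∉ (ρ n).reset) :
    lastReset ρ x (n + 1) = lastReset ρ x n := by
  simp [lastReset, h]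

theorem lt_of_lastReset_eq_some (h : lastReset ρ x n = some m) : m < n := by
  induction n with
  | zero => simp [lastReset] at h
  | succ n ih =>
    by_cases hx : x ∈ (ρ n).reset
    · rw [lastReset_succ_of_mem hx, Option.some_inj] at h
      omega
    · rw [lastReset_succ_of_notMem hx] at h
      exact (ih h).trans n.lt_succ_self

theorem lastReset_eq_some_of_le {k : ℕ} (hkn : k ≤ n) (h : lastReset ρ x n = some m)
    (hmk : m < k) : lastReset ρ x k = some m := by
  induction n, hkn using Nat.le_induction with
  | base => exact h
  | succ n hkn ih =>
    by_cases hx : x ∈ (ρ n).reset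
    · rw [lastReset_succ_of_mem hx, Option.some_inj] at h
      omega
    · exact ih (by rwa [lastReset_succ_of_notMem hx] at h)

theorem lastReset_eq_some (hmn : m < n) (hx : x ∈ (ρ m).reset)
    (h : ∀ k, m < k → k < n → x ∉ (ρ k).reset) : lastReset ρ x n = some m := by
  induction n, hmn using Nat.le_induction with
  | base => exact lastReset_succ_of_mem hx
  | succ n hmn ih =>
    rw [lastReset_succ_of_notMem (h n hmn n.lt_succ_self)]
    exact ih fun k hk hkn => h k hk (hkn.trans n.lt_succ_self)

theorem lastReset_congr {ρ' : ℕ → Tr Q C A} (h : ∀ k < n, ρ k = ρ' k) :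
    lastReset ρ x n = lastReset ρ' x n := by
  induction n with
  | zero => rfl
  | succ n ih =>
    rw [lastReset, lastReset, h n n.lt_succ_self, ih fun k hk => h k (hk.trans n.lt_succ_self)]

end lastReset

theorem coe_delayAt {w : ℕ → A × ℝ≥0} (hw : IsTimedWord w) (n : ℕ) :
    (delayAt w (n + 1) : ℝ) = (w (n + 1)).2 - (w n).2 := by
  simp [delayAt, NNReal.coe_sub (hw n.lt_succ_self).le]

theorem configs_succ_fst (T : TA Q C A) (w : ℕ → A × ℝ≥0) (ρ : ℕ → Tr Q C A) (n : ℕ) :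
    (T.configs w ρ (n + 1)).1 = (ρ n).dst :=
  rfl

theorem configs_fst_congr (T : TA Q C A) (w w' : ℕ → A × ℝ≥0) (ρ : ℕ → Tr Q C A) (n : ℕ) :
    (T.configs w ρ n).1 = (T.configs w' ρ n).1 := by
  cases n <;> rfl

theorem configs_succ_snd_of_mem (T : TA Q C A) (w : ℕ → A × ℝ≥0) {ρ : ℕ → Tr Q C A} {n : ℕ}
    {x : C} (hx : x ∈ (ρ n).reset) : (T.configs w ρ (n + 1)).2 x = 0 := by
  simp [configs, resetVal, hx]

theorem configs_succ_snd_of_notMem (T : TA Q C A) (w : ℕ → A × ℝ≥0) {ρ : ℕ → Tr Q C A}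
    {n : ℕ} {x : C} (hx : x ∉ (ρ n).reset) :
    (T.configs w ρ (n + 1)).2 x = (T.configs w ρ n).2 x + delayAt w n := by
  simp [configs, resetVal, hx]

theorem coe_configs_add_delayAt (T : TA Q C A) {w : ℕ → A × ℝ≥0} (hw : IsTimedWord w)
    (ρ : ℕ → Tr Q C A) (n : ℕ) (x : C) :
    (((T.configs w ρ n).2 x + delayAt w n : ℝ≥0) : ℝ)
      = stamp w (some n) - stamp w (lastReset ρ x n) := by
  induction n with
  | zero => simp [configs, lastReset, stamp, delayAt]
  | succ n ih =>
    rw [NNReal.coe_add, coe_delayAt hw]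
    by_cases hx : x ∈ (ρ n).reset
    · simp [configs_succ_snd_of_mem T w hx, lastReset_succ_of_mem hx, stamp]
    · rw [configs_succ_snd_of_notMem T w hx, lastReset_succ_of_notMem hx, ih]
      simp only [stamp]
      ring

theorem histOf_congr (r : List ((A × ℝ≥0) × Tr Q C A) → (A × ℝ≥0) → Tr Q C A)
    {w w' : ℕ → A × ℝ≥0} {n : ℕ} (h : ∀ m < n, w m = w' m) :
    histOf r w n = histOf r w' n := by
  induction n with
  | zero => rfl
  | succ n ih =>
    rw [histOf, histOf, ih fun m hm => h m (hm.trans n.lt_succ_self), h n n.lt_succ_self]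

theorem runOf_congr (r : List ((A × ℝ≥0) × Tr Q C A) → (A × ℝ≥0) → Tr Q C A)
    {w w' : ℕ → A × ℝ≥0} {n : ℕ} (h : ∀ m ≤ n, w m = w' m) :
    runOf r w n = runOf r w' n := by
  rw [runOf, runOf, histOf_congr r fun m hm => h m hm.le, h n le_rfl]

end TA

/-- Equal integers, or two reals in the same open interval `(k, k + 1)`: no guard with integer
constants tells them apart. -/
def RegionEquiv (q q' : ℝ) : Prop :=
  ⌊q⌋ = ⌊q'⌋ ∧ ⌈q⌉ = ⌈q'⌉

namespace RegionEquiv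

variable {q q' : ℝ}

theorem of_eq (h : q = q') : RegionEquiv q q' :=
  h ▸ ⟨rfl, rfl⟩

theorem of_mem_Ioo (k : ℤ) (hq : q ∈ Set.Ioo (k : ℝ) (k + 1)) (hq' : q' ∈ Set.Ioo (k : ℝ) (k + 1)) :
    RegionEquiv q q' := by
  have floor_eq {r : ℝ} (hr : r ∈ Set.Ioo (k : ℝ) (k + 1)) : ⌊r⌋ = k :=
    Int.floor_eq_iff.mpr ⟨hr.1.le, hr.2⟩
  have ceil_eq {r : ℝ} (hr : r ∈ Set.Ioo (k : ℝ) (k + 1)) : ⌈r⌉ = k + 1 :=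
    Int.ceil_eq_iff.mpr ⟨by push_cast; linarith [hr.1], by push_cast; exact hr.2.le⟩
  exact ⟨(floor_eq hq).trans (floor_eq hq').symm, (ceil_eq hq).trans (ceil_eq hq').symm⟩

theorem neg (h : RegionEquiv q q') : RegionEquiv (-q) (-q') := by
  rw [RegionEquiv, Int.floor_neg, Int.floor_neg, Int.ceil_neg, Int.ceil_neg, h.1, h.2]
  exact ⟨rfl, rfl⟩

theorem le_natCast_iff (h : RegionEquiv q q') (c : ℕ) : q ≤ c ↔ q' ≤ c := by
  rw [← Int.cast_natCast, ← Int.ceil_le, ← Int.ceil_le, h.2]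

theorem lt_natCast_iff (h : RegionEquiv q q') (c : ℕ) : q < c ↔ q' < c := by
  rw [← Int.cast_natCast, ← Int.floor_lt, ← Int.floor_lt, h.1]

end RegionEquiv

theorem Guard.sat_iff_of_regionEquiv {C : Type} (g : Guard C) {ν ν' : C → ℝ≥0}
    (h₁ : ∀ x, RegionEquiv (ν x) (ν' x))
    (h₂ : ∀ x y, RegionEquiv ((ν x : ℝ) - ν y) ((ν' x : ℝ) - ν' y)) :
    g.sat ν ↔ g.sat ν' := by
  induction g with
  | tt => rfl
  | le x n => exact (h₁ x).le_natCast_iff n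
  | lt x n => exact (h₁ x).lt_natCast_iff n
  | dle x y n => exact (h₂ x y).le_natCast_iff n
  | dlt x y n => exact (h₂ x y).lt_natCast_iff n
  | band g₁ g₂ ih₁ ih₂ => exact and_congr ih₁ ih₂
  | bnot g ih => exact not_congr ih

namespace TA

variable {Q C A : Type}

/-- The events that determine the clock values at the `n`-th event of a run `ρ`: the event
itself and the last reset of each clock. -/
def resetPoints (ρ : ℕ → Tr Q C A) (n : ℕ) : Set (Option ℕ) :=
  insert (some n) (Set.range fun x => lastReset ρ x n)

theorem le_of_some_mem_resetPoints {ρ : ℕ → Tr Q C A} {n m : ℕ}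
    (h : some m ∈ resetPoints ρ n) : m ≤ n := by
  obtain h | ⟨x, hx⟩ := h
  · exact (Option.some_inj.mp h).le
  · exact (lt_of_lastReset_eq_some hx).le

theorem some_notMem_resetPoints {ρ : ℕ → Tr Q C A} {j k n : ℕ} (hjk : j < k) (hkn : k ≤ n)
    (hj : ∀ x, lastReset ρ x k ≠ some j) : some j ∉ resetPoints ρ n := by
  rintro (h | ⟨x, hx⟩)
  · have := Option.some_inj.mp h
    omega
  · exact hj x (lastReset_eq_some_of_le hkn hx hjk)

theorem IsRunOn.of_regionEquiv {T : TA Q C A} {w w' : ℕ → A × ℝ≥0} {ρ : ℕ → Tr Q C A}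
    (hw : IsTimedWord w) (hw' : IsTimedWord w') (hρ : T.IsRunOn w ρ)
    (hletter : ∀ n, (w' n).1 = (w n).1)
    (hregion : ∀ n, ∀ a ∈ resetPoints ρ n, ∀ b ∈ resetPoints ρ n,
      RegionEquiv (stamp w b - stamp w a) (stamp w' b - stamp w' a)) :
    T.IsRunOn w' ρ := by
  intro n
  obtain ⟨hmem, hlet, hsrc, hsat⟩ := hρ n
  refine ⟨hmem, hlet.trans (hletter n).symm, hsrc.trans (configs_fst_congr T w w' ρ n), ?_⟩
  have hlast (x : C) : lastReset ρ x n ∈ resetPoints ρ n := Or.inr ⟨x, rfl⟩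
  refine (Guard.sat_iff_of_regionEquiv _ (fun x => ?_) (fun x y => ?_)).mp hsat
  · rw [coe_configs_add_delayAt T hw, coe_configs_add_delayAt T hw']
    exact hregion n _ (hlast x) _ (Set.mem_insert _ _)
  · rw [coe_configs_add_delayAt T hw, coe_configs_add_delayAt T hw',
      coe_configs_add_delayAt T hw, coe_configs_add_delayAt T hw', sub_sub_sub_cancel_left,
      sub_sub_sub_cancel_left]
    exact hregion n _ (hlast x) _ (hlast y)

theorem exists_forall_lastReset_ne [Fintype C] (ρ : ℕ → Tr Q C A) {n : ℕ}
    (hn : Fintype.card C < n) : ∃ j < n, ∀ x, lastReset ρ x n ≠ some j := by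
  classical
  have hcard : (Finset.univ.image fun x => lastReset ρ x n).card < ((Finset.range n).map
      ⟨some, Option.some_injective _⟩).card := by
    simpa using Finset.card_image_le.trans_lt hn
  obtain ⟨_, hmem, hnot⟩ := Finset.exists_mem_notMem_of_card_lt_card hcard
  obtain ⟨j, hj, rfl⟩ := Finset.mem_map.mp hmem
  exact ⟨j, Finset.mem_range.mp hj, fun x hx => hnot (Finset.mem_image.mpr ⟨x, by simp, hx⟩)⟩

end TA

namespace OneClock

open TA

def clockIsOne : Guard Unit :=
  .band (.le () 1) (.bnot (.lt () 1))

theorem sat_clockIsOne {ν : Unit → ℝ≥0} : clockIsOne.sat ν ↔ (ν () : ℝ) = 1 := by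
  simp only [clockIsOne, Guard.sat, Nat.cast_one, not_lt]
  exact ⟨fun h => le_antisymm h.1 h.2, fun h => ⟨h.le, h.ge⟩⟩

def idle : Tr (Fin 3) Unit Unit := ⟨0, .tt, (), ∅, 0⟩
def start : Tr (Fin 3) Unit Unit := ⟨0, .tt, (), Set.univ, 1⟩
def wait : Tr (Fin 3) Unit Unit := ⟨1, .tt, (), ∅, 1⟩
def hit : Tr (Fin 3) Unit Unit := ⟨1, clockIsOne, (), ∅, 2⟩
def stay : Tr (Fin 3) Unit Unit := ⟨2, .tt, (), ∅, 2⟩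

/-- Guesses an event (`start`, resetting the clock) and then an event exactly one time unit
later (`hit`); state `2` is the target. -/
def automaton : TA (Fin 3) Unit Unit :=
  ⟨0, {idle, start, wait, hit, stay}⟩

theorem automaton_trans_finite : automaton.trans.Finite := by
  simp [automaton]

variable {w : ℕ → Unit × ℝ≥0} {ρ : ℕ → Tr (Fin 3) Unit Unit}

theorem runOn_invariant (hw : IsTimedWord w) (hρ : automaton.IsRunOn w ρ) (n : ℕ) :
    ((automaton.configs w ρ n).1 = 1 → ∃ i, lastReset ρ () n = some i) ∧
    ((automaton.configs w ρ n).1 = 2 → ∃ i j : ℕ, ((w j).2 : ℝ) - (w i).2 = 1) := by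
  induction n with
  | zero => simp [configs, automaton]
  | succ n ih =>
    obtain ⟨hmem, -, hsrc, hsat⟩ := hρ n
    rw [configs_succ_fst]
    rcases hmem with h | h | h | h | h <;> rw [h] at hsrc hsat ⊢
    · simp [idle]
    · exact ⟨fun _ => ⟨n, lastReset_succ_of_mem (by simp [h, start])⟩, by simp [start]⟩
    · refine ⟨fun _ => ?_, by simp [wait]⟩
      rw [lastReset_succ_of_notMem (by simp [h, wait])]
      exact ih.1 hsrc.symm
    · refine ⟨by simp [hit], fun _ => ?_⟩
      obtain ⟨i, hi⟩ := ih.1 hsrc.symm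
      have hclock := coe_configs_add_delayAt automaton hw ρ n ()
      rw [sat_clockIsOne.mp hsat, hi] at hclock
      exact ⟨i, n, hclock.symm⟩
    · exact ⟨by simp [stay], fun _ => ih.2 hsrc.symm⟩

theorem lang_subset : automaton.Lang (reachAcc {2}) ⊆ LPrime := by
  rintro w ⟨hw, ρ, hρ, n, hn⟩
  refine ⟨hw, ?_⟩
  rcases hn with h | h
  · exact (runOn_invariant hw hρ n).2 (((hρ n).2.2.1).symm.trans h)
  · exact (runOn_invariant hw hρ (n + 1)).2 h

def guessRun (i j n : ℕ) : Tr (Fin 3) Unit Unit :=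
  if n < i then idle else if n = i then start else if n < j then wait
  else if n = j then hit else stay

def guessState (i j n : ℕ) : Fin 3 :=
  if n ≤ i then 0 else if n ≤ j then 1 else 2

theorem guessRun_mem (i j n : ℕ) : guessRun i j n ∈ automaton.trans := by
  unfold guessRun; split_ifs <;> simp [automaton]

theorem guessRun_src {i j : ℕ} (n : ℕ) : (guessRun i j n).src = guessState i j n := by
  unfold guessRun guessState; split_ifs <;> first | rfl | omega

theorem guessRun_dst {i j : ℕ} (hij : i < j) (n : ℕ) :
    (guessRun i j n).dst = guessState i j (n + 1) := by
  unfold guessRun guessState; split_ifs <;> first | rfl | omega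

theorem configs_guessRun_fst {i j : ℕ} (hij : i < j) (n : ℕ) :
    (automaton.configs w (guessRun i j) n).1 = guessState i j n := by
  cases n with
  | zero => simp [configs, automaton, guessState]
  | succ n => exact guessRun_dst hij n

theorem guessRun_self {i j : ℕ} (hij : i < j) : guessRun i j j = hit := by
  simp [guessRun, hij.not_gt, hij.ne']

theorem lastReset_guessRun {i j : ℕ} (hij : i < j) : lastReset (guessRun i j) () j = some i := by
  refine lastReset_eq_some hij (by simp [guessRun, start]) fun k hik hkj => ?_
  simp [guessRun, wait, show ¬k < i by omega, hik.ne', hkj]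

theorem lPrime_subset : LPrime ⊆ automaton.Lang (reachAcc {2}) := by
  rintro w ⟨hw, i, j, hij⟩
  have hlt : i < j := hw.lt_iff_lt.mp (by rw [← NNReal.coe_lt_coe]; linarith)
  refine ⟨hw, guessRun i j, fun n => ⟨guessRun_mem i j n, rfl, ?_, ?_⟩,
    j, Or.inr (by simp [guessRun_self hlt, hit])⟩
  · rw [guessRun_src, configs_guessRun_fst hlt]
  · by_cases hn : n = j
    · subst hn
      rw [guessRun_self hlt, hit, sat_clockIsOne, coe_configs_add_delayAt automaton hw,
        lastReset_guessRun hlt]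
      exact hij
    · unfold guessRun; split_ifs <;> trivial

theorem lang_eq : automaton.Lang (reachAcc {2}) = LPrime :=
  lang_subset.antisymm lPrime_subset

end OneClock

namespace Witness

open TA

noncomputable def prefixTime (K m : ℕ) : ℝ := (m + 1) / (K + 2)

noncomputable def eps (K : ℕ) : ℝ := 1 / (2 * (K + 2))

noncomputable def time (K j : ℕ) (δ : ℝ) (n : ℕ) : ℝ :=
  if n ≤ K then prefixTime K n else if n = K + 1 then 1 + prefixTime K j + δ else 2 * n

noncomputable def word (K j : ℕ) (δ : ℝ) (n : ℕ) : Unit × ℝ≥0 :=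
  ((), (time K j δ n).toNNReal)

variable {K j m n : ℕ} {δ : ℝ}

theorem eps_pos : 0 < eps K := by unfold eps; positivity

theorem prefixTime_pos : 0 < prefixTime K m := by unfold prefixTime; positivity

theorem prefixTime_add_two_eps_le (h : m < n) : prefixTime K m + 2 * eps K ≤ prefixTime K n := by
  have : (m : ℝ) + 1 ≤ n := by exact_mod_cast h
  unfold prefixTime eps
  rw [div_add' _ _ _ (by positivity), div_le_div_iff_of_pos_right (by positivity)]
  field_simp
  linarith

theorem prefixTime_add_two_eps_le_one (h : m ≤ K) : prefixTime K m + 2 * eps K ≤ 1 := by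
  have : (m : ℝ) ≤ K := by exact_mod_cast h
  unfold prefixTime eps
  rw [div_add' _ _ _ (by positivity), div_le_one (by positivity)]
  field_simp
  linarith

theorem time_of_le (h : n ≤ K) : time K j δ n = prefixTime K n := by
  simp [time, h]

theorem time_succ : time K j δ (K + 1) = 1 + prefixTime K j + δ := by
  simp [time]

theorem time_of_gt (h : K + 1 < n) : time K j δ n = 2 * n := by
  simp [time, show ¬n ≤ K by omega, show n ≠ K + 1 by omega]

theorem time_eq_of_ne {δ' : ℝ} (h : n ≠ K + 1) : time K j δ n = time K j δ' n := by
  simp [time, h]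

theorem cases_index (n : ℕ) : n ≤ K ∨ n = K + 1 ∨ K + 1 < n := by omega

theorem time_lt_time_succ (hj : j ≤ K) (hδ : 0 ≤ δ) (hδ' : δ ≤ eps K) (n : ℕ) :
    time K j δ n < time K j δ (n + 1) := by
  have := eps_pos (K := K)
  have := prefixTime_add_two_eps_le_one hj
  rcases cases_index (K := K) n with h | rfl | h
  · rcases (Nat.lt_or_ge n K) with h' | h'
    · rw [time_of_le h, time_of_le h']
      linarith [prefixTime_add_two_eps_le (K := K) n.lt_succ_self]
    · rw [time_of_le h, show n + 1 = K + 1 by omega, time_succ]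
      linarith [prefixTime_add_two_eps_le_one h, prefixTime_pos (K := K) (m := j)]
  · rw [time_succ, time_of_gt (by omega)]
    push_cast
    linarith
  · rw [time_of_gt h, time_of_gt (by omega)]
    push_cast
    linarith

theorem time_nonneg (hj : j ≤ K) (hδ : 0 ≤ δ) (hδ' : δ ≤ eps K) (n : ℕ) : 0 ≤ time K j δ n := by
  induction n with
  | zero => rw [time_of_le (Nat.zero_le K)]; exact prefixTime_pos.le
  | succ n ih => exact ih.trans (time_lt_time_succ hj hδ hδ' n).le

theorem coe_word (hj : j ≤ K) (hδ : 0 ≤ δ) (hδ' : δ ≤ eps K) (n : ℕ) :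
    ((word K j δ n).2 : ℝ) = time K j δ n :=
  Real.coe_toNNReal _ (time_nonneg hj hδ hδ' n)

theorem isTimedWord_word (hj : j ≤ K) (hδ : 0 ≤ δ) (hδ' : δ ≤ eps K) :
    IsTimedWord (word K j δ) := by
  refine strictMono_nat_of_lt_succ fun n => ?_
  rw [← NNReal.coe_lt_coe, coe_word hj hδ hδ', coe_word hj hδ hδ']
  exact time_lt_time_succ hj hδ hδ' n

theorem word_eq_of_le {j' : ℕ} {δ' : ℝ} (h : n ≤ K) : word K j δ n = word K j' δ' n := by
  simp [word, time_of_le h]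

theorem word_mem_lPrime (hj : j ≤ K) : word K j 0 ∈ LPrime := by
  refine ⟨isTimedWord_word hj le_rfl eps_pos.le, j, K + 1, ?_⟩
  rw [coe_word hj le_rfl eps_pos.le, coe_word hj le_rfl eps_pos.le, time_succ, time_of_le hj]
  ring

theorem word_eps_notMem_lPrime (hj : j ≤ K) : word K j (eps K) ∉ LPrime := by
  rintro ⟨-, a, b, hab⟩
  rw [coe_word hj eps_pos.le le_rfl, coe_word hj eps_pos.le le_rfl] at hab
  have := eps_pos (K := K)
  have := prefixTime_add_two_eps_le_one hj
  have hpre {m : ℕ} (hm : m ≤ K) : 0 < prefixTime K m ∧ prefixTime K m + 2 * eps K ≤ 1 :=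
    ⟨prefixTime_pos, prefixTime_add_two_eps_le_one hm⟩
  rcases cases_index (K := K) a with ha | rfl | ha <;>
    rcases cases_index (K := K) b with hb | rfl | hb
  · rw [time_of_le ha, time_of_le hb] at hab
    linarith [hpre ha, hpre hb]
  · rw [time_of_le ha, time_succ] at hab
    rcases lt_trichotomy a j with h | rfl | h
    · linarith [prefixTime_add_two_eps_le (K := K) h]
    · linarith
    · linarith [prefixTime_add_two_eps_le (K := K) h]
  · have : (K : ℝ) + 1 < b := by exact_mod_cast hb
    rw [time_of_le ha, time_of_gt hb] at hab
    linarith [hpre ha]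
  · rw [time_succ, time_of_le hb] at hab
    linarith [hpre hb, prefixTime_pos (K := K) (m := j)]
  · rw [sub_self] at hab
    exact zero_ne_one hab
  · have : (K : ℝ) + 2 ≤ b := by exact_mod_cast hb
    rw [time_succ, time_of_gt hb] at hab
    linarith [hpre hj, (K.cast_nonneg : (0 : ℝ) ≤ K)]
  · rw [time_of_gt ha, time_of_le hb] at hab
    linarith [hpre hb]
  · have : (K : ℝ) + 1 < a := by exact_mod_cast ha
    rw [time_of_gt ha, time_succ] at hab
    linarith [prefixTime_pos (K := K) (m := j), (K.cast_nonneg : (0 : ℝ) ≤ K)]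
  · rw [time_of_gt ha, time_of_gt hb] at hab
    have : ((2 * b - 2 * a : ℤ) : ℝ) = 1 := by push_cast; linarith
    have : 2 * (b : ℤ) - 2 * a = 1 := by exact_mod_cast this
    omega

theorem stamp_word_eq_of_ne {δ' : ℝ} {c : Option ℕ} (hc : c ≠ some (K + 1)) :
    stamp (word K j δ) c = stamp (word K j δ') c := by
  rcases c with _ | m
  · rfl
  · simp only [stamp, word, time_eq_of_ne (δ := δ) (δ' := δ') fun h => hc (congrArg some h)]

theorem regionEquiv_delay (hj : j ≤ K) {c : Option ℕ} (hcj : c ≠ some j)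
    (hcK : c ≠ some (K + 1)) :
    RegionEquiv (1 + prefixTime K j - stamp (word K j 0) c)
      (1 + prefixTime K j + eps K - stamp (word K j 0) c) := by
  have := prefixTime_pos (K := K) (m := j)
  have := prefixTime_add_two_eps_le_one hj
  have heps := eps_pos (K := K)
  rcases c with _ | m
  · exact .of_mem_Ioo 1 ⟨by simp [stamp]; linarith, by simp [stamp]; linarith⟩
      ⟨by simp [stamp]; linarith, by simp [stamp]; linarith⟩
  simp only [stamp, coe_word hj le_rfl heps.le]
  rcases cases_index (K := K) m with hm | rfl | hm
  · rw [time_of_le hm]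
    have := prefixTime_add_two_eps_le_one hm
    have := prefixTime_pos (K := K) (m := m)
    rcases lt_or_gt_of_ne fun h => hcj (congrArg some h) with h | h
    · have := prefixTime_add_two_eps_le (K := K) h
      exact .of_mem_Ioo 1 ⟨by push_cast; linarith, by push_cast; linarith⟩
        ⟨by push_cast; linarith, by push_cast; linarith⟩
    · have := prefixTime_add_two_eps_le (K := K) h
      exact .of_mem_Ioo 0 ⟨by push_cast; linarith, by push_cast; linarith⟩
        ⟨by push_cast; linarith, by push_cast; linarith⟩
  · exact absurd rfl hcK
  · rw [time_of_gt hm]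
    exact .of_mem_Ioo (1 - 2 * m) ⟨by push_cast; linarith, by push_cast; linarith⟩
      ⟨by push_cast; linarith, by push_cast; linarith⟩

theorem regionEquiv_stamp_sub_stamp (hj : j ≤ K) {a b : Option ℕ}
    (hab : (a ≠ some j ∧ b ≠ some j) ∨ (a ≠ some (K + 1) ∧ b ≠ some (K + 1))) :
    RegionEquiv (stamp (word K j 0) b - stamp (word K j 0) a)
      (stamp (word K j (eps K)) b - stamp (word K j (eps K)) a) := by
  have hsucc (δ : ℝ) (hδ : 0 ≤ δ) (hδ' : δ ≤ eps K) :
      stamp (word K j δ) (some (K + 1)) = 1 + prefixTime K j + δ := by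
    simp only [stamp, coe_word hj hδ hδ', time_succ]
  have hgood := hsucc 0 le_rfl eps_pos.le
  have hbad := hsucc (eps K) eps_pos.le le_rfl
  rw [add_zero] at hgood
  by_cases ha : a = some (K + 1) <;> by_cases hb : b = some (K + 1)
  · subst ha hb
    exact .of_eq (by rw [sub_self, sub_self])
  · have hbj : b ≠ some j := by tauto
    subst ha
    rw [hgood, hbad, stamp_word_eq_of_ne (δ := eps K) (δ' := 0) hb, ← neg_sub,
      ← neg_sub (1 + _ + _)]
    exact (regionEquiv_delay hj hbj hb).neg
  · have haj : a ≠ some j := by tauto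
    subst hb
    rw [hgood, hbad, stamp_word_eq_of_ne (δ := eps K) (δ' := 0) ha]
    exact regionEquiv_delay hj haj ha
  · exact .of_eq (by rw [stamp_word_eq_of_ne ha, stamp_word_eq_of_ne hb])

end Witness

open TA Witness in
theorem not_hd_parityAcc_and_lang_eq_lPrime {Q C : Type} [Fintype C] (T : TA Q C Unit)
    (pri : Q → ℕ) : ¬(T.HD (parityAcc pri) ∧ T.Lang (parityAcc pri) = LPrime) := by
  rintro ⟨⟨r, hr⟩, hlang⟩
  set K := Fintype.card C
  obtain ⟨j, hjK, hfresh⟩ := exists_forall_lastReset_ne (runOf r (word K 0 0)) K.lt_succ_self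
  set ρ := runOf r (word K j 0)
  have hprefix : ∀ k < K + 1, ρ k = runOf r (word K 0 0) k := fun k hk =>
    runOf_congr r fun m hm => word_eq_of_le (by omega)
  have hseparate (n : ℕ) : some j ∉ resetPoints ρ n ∨ some (K + 1) ∉ resetPoints ρ n := by
    rcases Nat.lt_or_ge n (K + 1) with hn | hn
    · exact .inr fun h => absurd (le_of_some_mem_resetPoints h) (by omega)
    · exact .inl (some_notMem_resetPoints hjK hn fun x => lastReset_congr hprefix ▸ hfresh x)
  have hj : j ≤ K := Nat.lt_succ_iff.mp hjK
  obtain ⟨hrun, hacc⟩ := hr _ (hlang ▸ word_mem_lPrime hj)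
  have hrun' : T.IsRunOn (word K j (eps K)) ρ :=
    hrun.of_regionEquiv (isTimedWord_word hj le_rfl eps_pos.le)
      (isTimedWord_word hj eps_pos.le le_rfl) (fun _ => rfl) fun n a ha b hb =>
        regionEquiv_stamp_sub_stamp hj <| (hseparate n).imp
          (fun h => ⟨ne_of_mem_of_not_mem ha h, ne_of_mem_of_not_mem hb h⟩)
          (fun h => ⟨ne_of_mem_of_not_mem ha h, ne_of_mem_of_not_mem hb h⟩)
  exact word_eps_notMem_lPrime hj
    (hlang ▸ ⟨isTimedWord_word hj eps_pos.le le_rfl, ρ, hrun', hacc⟩)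

/-- `L'` is recognized by a nondeterministic one-clock timed automaton
with reachability acceptance, but by no history-deterministic timed automaton with
parity acceptance, whatever its number of clocks. -/
theorem stmt11 :
    (∃ (Q : Type) (_ : Fintype Q) (T : TA Q Unit Unit) (F : Set Q),
      T.trans.Finite ∧ T.Lang (TA.reachAcc F) = LPrime) ∧
    (∀ (Q C : Type) (_ : Fintype Q) (_ : Fintype C) (T : TA Q C Unit)
      (_ : T.trans.Finite) (pri : Q → ℕ),
        ¬(T.HD (parityAcc pri) ∧ T.Lang (parityAcc pri) = LPrime)) :=
  ⟨⟨Fin 3, inferInstance, OneClock.automaton, {2}, OneClock.automaton_trans_finite,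
      OneClock.lang_eq⟩,
    fun _ _ _ _ T _ pri => not_hd_parityAcc_and_lang_eq_lPrime T pri⟩
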